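/- Let X and Y be binary strings of lengths n ≥ m respectively, with 1(X) = αm, 0(Y) ≈ αm (within δm), and suppose for the suffixes R_X of X and R_Y of Y of length αm we have 1(R_Y) < (α/2 − 4β)m and 0(R_X) ≤ (α/2 + 2β)m for some β > 2δ. Then lcs(X,Y) ≤ (2α − 2β + δ)m. -/
import Mathlib

lemma count_true_false (l : List Bool) : l.count true + l.count false = l.length := by
  induction l with
  | nil => simp
  | cons b t ih =>
    cases b <;> simp [List.count_cons] <;> omega

noncomputable def lcsLen {α : Type*} (X Y : List α) : ℕ :=
  sSup {n | ∃ C : List α, C.Sublist X ∧ C.Sublist Y ∧ C.length = n}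

theorem lcs_upper_bound_case1b (X Y : List Bool) (n m a : ℕ) (α β δ : ℝ)
    (hX : X.length = n) (hY : Y.length = m) (hmn : m ≤ n)
    (ha : (a : ℝ) = α * m) (ham : a ≤ m)
    (h1X : (X.count true : ℝ) = α * m)
    (h0Y : |(Y.count false : ℝ) - α * m| ≤ δ * m)
    (h1RY : ((Y.drop (m - a)).count true : ℝ) < (α / 2 - 4 * β) * m)
    (h0RX : ((X.drop (n - a)).count false : ℝ) ≤ (α / 2 + 2 * β) * m)
    (hβδ : β > 2 * δ) :
    (lcsLen X Y : ℝ) ≤ (2 * α - 2 * β + δ) * m := by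
  -- the sSup is attained
  have hne : {k | ∃ C : List Bool, C.Sublist X ∧ C.Sublist Y ∧ C.length = k}.Nonempty :=
    ⟨0, [], List.nil_sublist _, List.nil_sublist _, rfl⟩
  have hbdd : BddAbove {k | ∃ C : List Bool, C.Sublist X ∧ C.Sublist Y ∧ C.length = k} := by
    refine ⟨X.length, ?_⟩
    rintro k ⟨C, hCX, _, rfl⟩
    exact hCX.length_le
  obtain ⟨C, hCX, hCY, hClen⟩ := Nat.sSup_mem hne hbdd
  rw [lcsLen, ← hClen]
  -- set up the splits
  have haX : a ≤ n := le_trans ham hmn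
  set LX := X.take (n - a) with hLX
  set RX := X.drop (n - a) with hRX
  set LY := Y.take (m - a) with hLY
  set RY := Y.drop (m - a) with hRY
  have hXsplit : LX ++ RX = X := List.take_append_drop _ _
  have hYsplit : LY ++ RY = Y := List.take_append_drop _ _
  have hRXlen : RX.length = a := by rw [hRX, List.length_drop, hX]; omega
  have hRYlen : RY.length = a := by rw [hRY, List.length_drop, hY]; omega
  obtain ⟨C₁, C₂, hCsplit, hC1, hC2⟩ := List.sublist_append_iff.mp (hXsplit ▸ hCX)
  obtain ⟨D₁, D₂, hDsplit, hD1, hD2⟩ := List.sublist_append_iff.mp (hYsplit ▸ hCY)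
  -- basic count facts
  have habs : (Y.count false : ℝ) ≤ α * m + δ * m := by
    have := abs_le.mp h0Y; linarith [this.2]
  have hRXcount : RX.count true + RX.count false = a := by
    rw [count_true_false, hRXlen]
  have hRYcount : RY.count true + RY.count false = a := by
    rw [count_true_false, hRYlen]
  have hXcount : X.count true = LX.count true + RX.count true := by
    rw [← hXsplit, List.count_append]
  have hYcount : Y.count false = LY.count false + RY.count false := by
    rw [← hYsplit, List.count_append]
  have hClen' : C.length = C.count true + C.count false := (count_true_false C).symm
  have hCeq : C₁ ++ C₂ = D₁ ++ D₂ := by rw [← hCsplit, ← hDsplit]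
  rcases List.append_eq_append_iff.mp hCeq with ⟨E, hE1, hE2⟩ | ⟨F, hF1, hF2⟩
  · -- Case A : D₁ = C₁ ++ E, C₂ = E ++ D₂
    -- 1(C) ≤ 1(X), 0(C₁) ≤ 0(LY), 0(C₂) ≤ 0(RX)
    have h1C : C.count true ≤ X.count true := hCX.count_le true
    have h01 : C₁.count false ≤ D₁.count false := by
      have : C₁.Sublist D₁ := hE1 ▸ List.sublist_append_left _ _
      exact this.count_le false
    have h02 : D₁.count false ≤ LY.count false := hD1.count_le false
    have h03 : C₂.count false ≤ RX.count false := hC2.count_le false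
    have h0C : C.count false = C₁.count false + C₂.count false := by
      rw [hCsplit, List.count_append]
    -- cast everything to ℝ
    have key : (C.length : ℝ) ≤ (X.count true : ℝ) + (LY.count false : ℝ) + (RX.count false : ℝ) := by
      rw [hClen']
      push_cast
      have := (Nat.cast_le (α := ℝ)).mpr h1C
      have := (Nat.cast_le (α := ℝ)).mpr (le_trans h01 h02)
      have := (Nat.cast_le (α := ℝ)).mpr h03
      have h0C' : (C.count false : ℝ) = (C₁.count false : ℝ) + (C₂.count false : ℝ) := by
        exact_mod_cast congrArg (Nat.cast (R := ℝ)) h0C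
      linarith
    -- 0(LY) = 0(Y) - 0(RY), 0(RY) = a - 1(RY) > αm - (α/2-4β)m
    have hLYr : (LY.count false : ℝ) = (Y.count false : ℝ) - (RY.count false : ℝ) := by
      have : (Y.count false : ℝ) = (LY.count false : ℝ) + (RY.count false : ℝ) := by
        exact_mod_cast congrArg (Nat.cast (R := ℝ)) hYcount
      linarith
    have hRYr : (RY.count true : ℝ) + (RY.count false : ℝ) = (a : ℝ) := by
      exact_mod_cast congrArg (Nat.cast (R := ℝ)) hRYcount
    linarith
  · -- Case B : C₁ = D₁ ++ F, D₂ = F ++ C₂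
    have h0C : C.count false ≤ Y.count false := hCY.count_le false
    have h11 : C₁.count true ≤ LX.count true := hC1.count_le true
    have h12 : C₂.count true ≤ RY.count true := by
      have : C₂.Sublist D₂ := by
        rw [hF2]; exact List.sublist_append_right _ _
      exact (this.trans hD2).count_le true
    have h1C : C.count true = C₁.count true + C₂.count true := by
      rw [hCsplit, List.count_append]
    have key : (C.length : ℝ) ≤ (LX.count true : ℝ) + (RY.count true : ℝ) + (Y.count false : ℝ) := by
      rw [hClen']
      have := (Nat.cast_le (α := ℝ)).mpr h0C
      have := (Nat.cast_le (α := ℝ)).mpr h11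
      have := (Nat.cast_le (α := ℝ)).mpr h12
      have h1C' : (C.count true : ℝ) = (C₁.count true : ℝ) + (C₂.count true : ℝ) := by
        exact_mod_cast congrArg (Nat.cast (R := ℝ)) h1C
      push_cast
      linarith
    have hLXr : (LX.count true : ℝ) = (X.count true : ℝ) - (RX.count true : ℝ) := by
      have : (X.count true : ℝ) = (LX.count true : ℝ) + (RX.count true : ℝ) := by
        exact_mod_cast congrArg (Nat.cast (R := ℝ)) hXcount
      linarith
    have hRXr : (RX.count true : ℝ) + (RX.count false : ℝ) = (a : ℝ) := by
      exact_mod_cast congrArg (Nat.cast (R := ℝ)) hRXcount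
    linarith
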